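/- arXiv:1709.10461 — 7 statements merged into one kernel-verified Lean document; each statement's English description precedes it below -/
import Mathlib

section
/- Let n, d ≥ 1 and let H ⊆ ℕ^n be the additive submonoid generated by all vectors a ∈ ℕ^n with coordinate sum d, except the vector m = (d,0,...,0). Then H is normal: if z ∈ ℤ^n lies in the group generated by H and k·z ∈ H for some positive integer k, then z ∈ H. -/
/-!
Writing `q(x) = ∑ i, x i` for the total degree, `H` is cut out of `ℕ^n` by the congruence
`d ∣ q(x)` together with the linear inequality `d * x i₀ + q(x) ≤ d * q(x)` (equivalently
`x i₀ + t ≤ t * d` when `q(x) = t * d`). Generators satisfy both conditions, and conversely an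
`x` satisfying them splits off a generator `a ≤ x` leaving an element of degree `(t - 1) * d`
that still satisfies them. The congruence holds on the whole group generated by `H` and the
inequality is invariant under scaling by `k > 0`, so `H` is normal.
-/

open Finset

lemma Finset.exists_le_sum_eq {α : Type*} [DecidableEq α] {s : Finset α} {f : α → ℕ} {n : ℕ}
    (hn : n ≤ ∑ i ∈ s, f i) : ∃ g ≤ f, ∑ i ∈ s, g i = n := by
  induction n with
  | zero => exact ⟨0, fun _ => Nat.zero_le _, by simp⟩
  | succ n ih =>
    obtain ⟨g, hgf, hg⟩ := ih (by omega)
    obtain ⟨i, hi, hgi⟩ := exists_lt_of_sum_lt (hg.trans_lt hn)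
    refine ⟨g + Pi.single i 1, fun j => ?_, ?_⟩
    · rcases eq_or_ne j i with rfl | hj
      · simpa using hgi
      · simpa [hj] using hgf j
    · simp [sum_add_distrib, hg, hi]

section PinchedVeronese

variable {ι : Type*} [Fintype ι] [DecidableEq ι]

def pinchedVeroneseGenerators (d : ℕ) (i₀ : ι) : Set (ι → ℕ) :=
  {a | ∑ i, a i = d ∧ a ≠ Pi.single i₀ d}

variable {d : ℕ} {i₀ : ι}

lemma apply_lt_of_mem_pinchedVeroneseGenerators {a : ι → ℕ}
    (ha : a ∈ pinchedVeroneseGenerators d i₀) : a i₀ < d := by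
  obtain ⟨hsum, hne⟩ := ha
  obtain ⟨j, hj⟩ := Function.ne_iff.mp hne
  rcases eq_or_ne j i₀ with rfl | hj₀
  · exact lt_of_le_of_ne (hsum ▸ single_le_sum (by simp) (mem_univ _)) (by simpa using hj)
  · exact hsum ▸ single_lt_sum hj₀ (mem_univ _) (mem_univ _) 
      (Nat.pos_of_ne_zero (by simpa [hj₀] using hj)) (by simp)

lemma exists_pinchedVeroneseGenerator_le {t : ℕ} {x : ι → ℕ} (hx : ∑ i, x i = t * d + d)
    (hx₀ : x i₀ + t + 1 ≤ t * d + d) :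
    ∃ a ∈ pinchedVeroneseGenerators d i₀, a ≤ x ∧ x i₀ - a i₀ + t ≤ t * d := by
  have hd : 0 < d := Nat.pos_of_ne_zero (by rintro rfl; simp at hx₀)
  have htd : t ≤ t * d := Nat.le_mul_of_pos_right t hd
  have hsplit := add_sum_erase univ x (mem_univ i₀)
  -- `a i₀ = c` must be `< d`, yet large enough that `x i₀ - c` stays within the new bound
  set c := min (x i₀) (d - 1) with hc
  obtain ⟨g, hgx, hg⟩ := exists_le_sum_eq (s := univ.erase i₀) (f := x) (n := d - c) (by omega)
  refine ⟨Function.update g i₀ c, ⟨?_, fun h => ?_⟩, fun i => ?_, ?_⟩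
  · rw [sum_update_of_mem (mem_univ i₀), sdiff_singleton_eq_erase, hg]
    omega
  · have := congrFun h i₀
    simp only [Function.update_self, Pi.single_eq_same] at this
    omega
  · rcases eq_or_ne i i₀ with rfl | hi
    · simp [hc]
    · simpa [hi] using hgx i
  · simp only [Function.update_self]
    omega

lemma mem_closure_pinchedVeroneseGenerators_of_sum_eq (t : ℕ) {x : ι → ℕ}
    (hx : ∑ i, x i = t * d) (hx₀ : x i₀ + t ≤ t * d) :
    x ∈ AddSubmonoid.closure (pinchedVeroneseGenerators d i₀) := by
  induction t generalizing x with
  | zero =>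
    obtain rfl : x = 0 := funext fun i => sum_eq_zero_iff.mp (by simpa using hx) i (mem_univ i)
    exact zero_mem _
  | succ t ih =>
    rw [add_one_mul] at hx hx₀
    obtain ⟨a, ha, hax, hxa⟩ := exists_pinchedVeroneseGenerator_le hx (by omega)
    have hsum : ∑ i, (x - a) i = t * d := by
      rw [Finset.sum_congr rfl fun i _ => Pi.sub_apply x a i,
        sum_tsub_distrib _ fun i _ => hax i, hx, ha.1]
      omega
    rw [← add_tsub_cancel_of_le hax]
    exact add_mem (AddSubmonoid.subset_closure ha) (ih hsum hxa)

theorem mem_closure_pinchedVeroneseGenerators_iff (hd : 0 < d) {x : ι → ℕ} :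
    x ∈ AddSubmonoid.closure (pinchedVeroneseGenerators d i₀) ↔
      d ∣ ∑ i, x i ∧ d * x i₀ + ∑ i, x i ≤ d * ∑ i, x i := by
  constructor
  · intro hx
    induction hx using AddSubmonoid.closure_induction with
    | mem a ha =>
      have := apply_lt_of_mem_pinchedVeroneseGenerators ha
      rw [ha.1]
      exact ⟨dvd_rfl, by nlinarith⟩
    | zero => simp
    | add u v _ _ hu hv =>
      simp only [Pi.add_apply, sum_add_distrib, mul_add]
      exact ⟨dvd_add hu.1 hv.1, by linarith [hu.2, hv.2]⟩
  · rintro ⟨⟨t, ht⟩, hle⟩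
    rw [ht, ← mul_add, mul_comm d t] at hle
    exact mem_closure_pinchedVeroneseGenerators_of_sum_eq t (ht.trans (mul_comm d t))
      (Nat.le_of_mul_le_mul_left hle hd)

end PinchedVeronese

lemma dvd_sum_of_mem_addSubgroupClosure {ι : Type*} [Fintype ι] {S : Set (ι → ℤ)} {d : ℤ}
    (hS : ∀ v ∈ S, d ∣ ∑ i, v i) {z : ι → ℤ} (hz : z ∈ AddSubgroup.closure S) :
    d ∣ ∑ i, z i := by
  induction hz using AddSubgroup.closure_induction with
  | mem v hv => exact hS v hv
  | zero => simp
  | add u v _ _ hu hv => simpa [sum_add_distrib] using dvd_add hu hv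
  | neg u _ hu => simpa using hu.neg_right

/-- Normality of the semigroup of the pinched Veronese ring `P_{n,d,(d,0,…,0)}`:
if `z` lies in the group generated by `H` (inside `ℤ^n`) and `k·z ∈ H` for some
`k > 0`, then `z ∈ H`. -/
theorem stmt_1 (n d : ℕ) (hn : 1 ≤ n) (hd : 1 ≤ d)
    (m : Fin n → ℕ) (hm : m = fun i => if i = (⟨0, hn⟩ : Fin n) then d else 0)
    (A : Set (Fin n → ℕ)) (hA : A = {a | (∑ i, a i) = d ∧ a ≠ m})
    (ι : (Fin n → ℕ) → (Fin n → ℤ)) (hι : ι = fun a i => (a i : ℤ))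
    (z : Fin n → ℤ) (hz : z ∈ AddSubgroup.closure (ι '' A))
    (k : ℕ) (hk : 0 < k)
    (hkz : (k : ℤ) • z ∈ ι '' ((AddSubmonoid.closure A : AddSubmonoid (Fin n → ℕ)) : Set (Fin n → ℕ))) :
    z ∈ ι '' ((AddSubmonoid.closure A : AddSubmonoid (Fin n → ℕ)) : Set (Fin n → ℕ)) := by
  replace hA : A = pinchedVeroneseGenerators d ⟨0, hn⟩ := by
    rw [hA, hm, ← funext fun i => Pi.single_apply _ d i]
    rfl
  subst hA hι
  obtain ⟨w, hw, hwz⟩ := hkz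
  have hwi (i : Fin n) : (w i : ℤ) = k * z i := by simpa using congrFun hwz i
  lift z to Fin n → ℕ using fun i =>
    nonneg_of_mul_nonneg_right (hwi i ▸ Nat.cast_nonneg _) (Int.natCast_pos.mpr hk)
  obtain rfl : w = k • z := funext fun i => Nat.cast_injective (R := ℤ) (by simpa using hwi i)
  have hdvd : d ∣ ∑ i, z i := by
    have := dvd_sum_of_mem_addSubgroupClosure (d := d) (by
      rintro _ ⟨a, ha, rfl⟩
      simp [← Nat.cast_sum, ha.1]) hz
    exact_mod_cast this
  rw [SetLike.mem_coe, mem_closure_pinchedVeroneseGenerators_iff hd] at hw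
  simp only [Pi.smul_apply, smul_eq_mul, ← mul_sum] at hw
  refine ⟨z, (mem_closure_pinchedVeroneseGenerators_iff hd).mpr ⟨hdvd, ?_⟩, rfl⟩
  exact Nat.le_of_mul_le_mul_left (by linarith [hw.2]) hk
end

section
/- Let n, d ≥ 1 and let H ⊆ ℕ^n be the additive submonoid generated by all vectors in ℕ^n of coordinate sum d except m = (d,0,...,0). A vector z ∈ ℕ^n of coordinate sum t·d (t ≥ 1) belongs to H if and only if the sum of its last n-1 coordinates is at least t. -/
/-!
Write `off w` for the sum of the coordinates of `w` other than the first. A generator `a` has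
coordinate sum `d` and `off a ≥ 1`, since `off a = 0` would force `a = (d, 0, …, 0)`; both
quantities are additive, so every `w ∈ H` satisfies `∑ w ≤ d · off w`, which for `∑ z = t·d`
is `t ≤ off z`. Conversely, if `∑ z = (t+1)·d` and `off z ≥ t+1`, then `z` contains a generator
with `off`-part `s = min (off z - t) d ≥ 1` and first coordinate `d - s`; removing it leaves a
vector of sum `t·d` with `off ≥ t`, and induction on `t` finishes.
-/

open Finset

lemma exists_le_sum_eq_of_le_sum {ι : Type*} [DecidableEq ι] (s : Finset ι) (f : ι → ℕ)
    {k : ℕ} (hk : k ≤ ∑ i ∈ s, f i) : ∃ g ≤ f, ∑ i ∈ s, g i = k := by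
  induction k with
  | zero => exact ⟨0, fun i => Nat.zero_le _, by simp⟩
  | succ k ih =>
    obtain ⟨g, hgf, hg⟩ := ih (by omega)
    obtain ⟨i, hi, hlt⟩ : ∃ i ∈ s, g i < f i := exists_lt_of_sum_lt (by omega)
    refine ⟨g + Pi.single i 1, fun j => ?_, ?_⟩
    · rcases eq_or_ne j i with rfl | hj
      · simpa using hlt
      · simpa [hj] using hgf j
    · simp only [Pi.add_apply, sum_add_distrib, hg, sum_pi_single', if_pos hi]

section Pinched

variable {ι : Type*} [Fintype ι] [DecidableEq ι] (i₀ : ι) (d : ℕ)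

def pinchedGenerators : Set (ι → ℕ) :=
  {a | ∑ i, a i = d ∧ a ≠ fun i => if i = i₀ then d else 0}

variable {i₀ d}

lemma eq_ite_iff_sum_erase_eq_zero {a : ι → ℕ} (ha : ∑ i, a i = d) :
    (a = fun i => if i = i₀ then d else 0) ↔ ∑ i ∈ univ.erase i₀, a i = 0 := by
  constructor
  · rintro rfl
    exact sum_eq_zero fun i hi => if_neg (ne_of_mem_erase hi)
  · intro h
    funext i
    rcases eq_or_ne i i₀ with rfl | hi
    · rw [← add_sum_erase _ _ (mem_univ i), h] at ha
      simpa using ha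
    · rw [if_neg hi]
      exact (sum_eq_zero_iff.1 h) i (mem_erase.2 ⟨hi, mem_univ i⟩)

lemma mem_pinchedGenerators_iff {a : ι → ℕ} :
    a ∈ pinchedGenerators i₀ d ↔ ∑ i, a i = d ∧ 0 < ∑ i ∈ univ.erase i₀, a i := by
  refine and_congr_right fun ha => ?_
  rw [Ne, eq_ite_iff_sum_erase_eq_zero ha, Nat.pos_iff_ne_zero]

lemma sum_le_mul_sum_erase_of_mem_closure {w : ι → ℕ}
    (hw : w ∈ AddSubmonoid.closure (pinchedGenerators i₀ d)) :
    ∑ i, w i ≤ d * ∑ i ∈ univ.erase i₀, w i := by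
  induction hw using AddSubmonoid.closure_induction with
  | mem a ha =>
    obtain ⟨hsum, hpos⟩ := mem_pinchedGenerators_iff.1 ha
    rw [hsum]
    exact Nat.le_mul_of_pos_right d hpos
  | zero => simp
  | add x y _ _ hx hy =>
    simp only [Pi.add_apply, sum_add_distrib, mul_add]
    exact add_le_add hx hy

lemma exists_mem_pinchedGenerators_add {z : ι → ℕ} {t : ℕ} (hz : ∑ i, z i = (t + 1) * d)
    (hoff : t + 1 ≤ ∑ i ∈ univ.erase i₀, z i) :
    ∃ a ∈ pinchedGenerators i₀ d, ∃ b, z = a + b ∧ ∑ i, b i = t * d ∧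
      t ≤ ∑ i ∈ univ.erase i₀, b i := by
  have hsplit : z i₀ + ∑ i ∈ univ.erase i₀, z i = t * d + d := by
    rw [add_sum_erase _ _ (mem_univ i₀), hz, add_one_mul]
  have hd : 0 < d := Nat.pos_of_ne_zero fun h => by
    rw [h, mul_zero, add_zero] at hsplit
    omega
  have htd : t ≤ t * d := Nat.le_mul_of_pos_right t hd
  obtain ⟨s, hs_pos, hs_d, hs_off, hs_z⟩ :
      ∃ s, 0 < s ∧ s ≤ d ∧ s + t ≤ ∑ i ∈ univ.erase i₀, z i ∧ d - s ≤ z i₀ := by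
    refine ⟨min (∑ i ∈ univ.erase i₀, z i - t) d, ?_⟩
    rcases min_cases (∑ i ∈ univ.erase i₀, z i - t) d with ⟨h, _⟩ | ⟨h, _⟩ <;> rw [h] <;> omega
  obtain ⟨g, hgz, hg⟩ := exists_le_sum_eq_of_le_sum (univ.erase i₀) z (k := s) (by omega)
  obtain ⟨a, ha⟩ : ∃ a, a = Function.update g i₀ (d - s) := ⟨_, rfl⟩
  have ha_i₀ : a i₀ = d - s := ha ▸ Function.update_self ..
  have ha_off : ∑ i ∈ univ.erase i₀, a i = s := by
    rw [ha, sum_update_of_notMem (notMem_erase i₀ _), hg]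
  have ha_sum : ∑ i, a i = d := by
    rw [← add_sum_erase _ _ (mem_univ i₀), ha_off, ha_i₀]
    omega
  have haz : a ≤ z := by
    intro i
    by_cases hi : i = i₀
    · rw [hi, ha_i₀]
      omega
    · exact ha ▸ (Function.update_of_ne hi _ g).trans_le (hgz i)
  have hsub (S : Finset ι) : ∑ i ∈ S, (z - a) i = ∑ i ∈ S, z i - ∑ i ∈ S, a i :=
    sum_tsub_distrib S fun i _ => haz i
  refine ⟨a, mem_pinchedGenerators_iff.2 ⟨ha_sum, by omega⟩, z - a,
    (add_tsub_cancel_of_le haz).symm, ?_, ?_⟩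
  · rw [hsub, hz, ha_sum, add_one_mul, Nat.add_sub_cancel]
  · rw [hsub, ha_off]
    omega

lemma mem_closure_pinchedGenerators_of_le_sum_erase {z : ι → ℕ} {t : ℕ}
    (hz : ∑ i, z i = t * d) (hoff : t ≤ ∑ i ∈ univ.erase i₀, z i) :
    z ∈ AddSubmonoid.closure (pinchedGenerators i₀ d) := by
  induction t generalizing z with
  | zero =>
    obtain rfl : z = 0 := funext fun i => (sum_eq_zero_iff.1 (by simpa using hz)) i (mem_univ i)
    exact zero_mem _
  | succ t ih =>
    obtain ⟨a, ha, b, rfl, hb, hboff⟩ := exists_mem_pinchedGenerators_add hz hoff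
    exact add_mem (AddSubmonoid.subset_closure ha) (ih hb hboff)

theorem mem_closure_pinchedGenerators_iff (hd : 1 ≤ d) {z : ι → ℕ} {t : ℕ}
    (hz : ∑ i, z i = t * d) :
    z ∈ AddSubmonoid.closure (pinchedGenerators i₀ d) ↔ t ≤ ∑ i ∈ univ.erase i₀, z i := by
  refine ⟨fun hzH => ?_, mem_closure_pinchedGenerators_of_le_sum_erase hz⟩
  have h := sum_le_mul_sum_erase_of_mem_closure hzH
  rw [hz, mul_comm] at h
  exact Nat.le_of_mul_le_mul_left h hd

end Pinched

theorem stmt_2_general (n d : ℕ) (hn : 1 ≤ n) (hd : 1 ≤ d)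
    (m : Fin n → ℕ) (hm : m = fun i => if i = (⟨0, hn⟩ : Fin n) then d else 0)
    (A : Set (Fin n → ℕ)) (hA : A = {a | (∑ i, a i) = d ∧ a ≠ m})
    (z : Fin n → ℕ) (t : ℕ) (hz : (∑ i, z i) = t * d) :
    z ∈ AddSubmonoid.closure A ↔
      t ≤ ∑ i ∈ Finset.univ.erase (⟨0, hn⟩ : Fin n), z i := by
  subst hm hA
  exact mem_closure_pinchedGenerators_iff hd hz

/-- Membership in the semigroup of `P_{n,d,(d,0,…,0)}`: a vector `z ∈ ℕ^n` of
coordinate sum `t·d` (`t ≥ 1`) lies in `H` iff the sum of its last `n-1`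
coordinates is at least `t`. -/
theorem stmt_2 (n d : ℕ) (hn : 1 ≤ n) (hd : 1 ≤ d)
    (m : Fin n → ℕ) (hm : m = fun i => if i = (⟨0, hn⟩ : Fin n) then d else 0)
    (A : Set (Fin n → ℕ)) (hA : A = {a | (∑ i, a i) = d ∧ a ≠ m})
    (z : Fin n → ℕ) (t : ℕ) (ht : 1 ≤ t) (hz : (∑ i, z i) = t * d) :
    z ∈ AddSubmonoid.closure A ↔
      t ≤ ∑ i ∈ Finset.univ.erase (⟨0, hn⟩ : Fin n), z i :=
  stmt_2_general n d hn hd m hm A hA z t hz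
end

section
/- Let n ≥ 2, d ≥ 3, and let m ∈ ℕ^n have coordinate sum d with every coordinate at most d-2. Let H be the additive submonoid of ℕ^n generated by all vectors of coordinate sum d except m. Then m itself is the only vector of coordinate sum a positive multiple of d that does not belong to H; in particular every vector of coordinate sum td with t ≥ 2 lies in H. -/
open Finset

namespace Stmt4Aux

variable {n : ℕ}

def mv (a : Fin n → ℕ) (i j : Fin n) (c : ℕ) : Fin n → ℕ :=
  fun k => if k = i then a k - c else if k = j then a k + c else a k

lemma sum_mv (a : Fin n → ℕ) {i j : Fin n} (hij : i ≠ j) {c : ℕ} (hc : c ≤ a i) :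
    ∑ k, mv a i j c k = ∑ k, a k := by
  have key : ∀ k, mv a i j c k + (Pi.single i c : Fin n → ℕ) k
      = a k + (Pi.single j c : Fin n → ℕ) k := by
    intro k
    by_cases hki : k = i
    · subst hki; simp [mv, Pi.single_apply, hij, Ne.symm hij]; omega
    · by_cases hkj : k = j
      · subst hkj; simp [mv, Pi.single_apply, hki, hij, Ne.symm hij]
      · simp [mv, Pi.single_apply, hki, hkj]
  have h : ∑ k, (mv a i j c k + (Pi.single i c : Fin n → ℕ) k)
      = ∑ k, (a k + (Pi.single j c : Fin n → ℕ) k) :=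
    Finset.sum_congr rfl (fun k _ => key k)
  simp only [Finset.sum_add_distrib, Finset.sum_pi_single, Finset.sum_pi_single',
    Finset.mem_univ, if_pos] at h
  omega

lemma mv_ne (a : Fin n → ℕ) {i : Fin n} (j : Fin n) {c : ℕ} (hc : 1 ≤ c) (hca : c ≤ a i) :
    mv a i j c ≠ a := by
  intro h
  have := congrFun h i
  simp [mv] at this
  omega

lemma greedy (z : Fin n → ℕ) (s : ℕ) (hs : s ≤ ∑ i, z i) :
    ∃ x : Fin n → ℕ, (∀ k, x k ≤ z k) ∧ (∑ i, x i) = s := by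
  induction s with
  | zero => exact ⟨0, fun k => Nat.zero_le _, by simp⟩
  | succ s ih =>
    obtain ⟨x, hx, hxs⟩ := ih (by omega)
    have hex : ∃ k, x k < z k := by
      by_contra h
      push_neg at h
      have : ∑ i, z i ≤ ∑ i, x i := Finset.sum_le_sum (fun i _ => h i)
      omega
    obtain ⟨k, hk⟩ := hex
    refine ⟨x + Pi.single k 1, fun j => ?_, ?_⟩
    · by_cases hjk : j = k
      · subst hjk; simp [Pi.single_apply]; omega
      · simp [Pi.single_apply, hjk]; exact hx j
    · simp [Finset.sum_add_distrib, Finset.sum_pi_single, Finset.sum_pi_single', hxs]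

section WithM

variable {d : ℕ} {m : Fin n → ℕ} (hd : 3 ≤ d) (hmsum : (∑ i, m i) = d)
  (hm : ∀ i, m i ≤ d - 2)

include hd hmsum hm

lemma exists_ne_pos (j : Fin n) : ∃ i, i ≠ j ∧ 1 ≤ m i := by
  by_contra h
  push_neg at h
  have hz : ∀ i, i ≠ j → m i = 0 := fun i hij => by have := h i hij; omega
  have : ∑ i, m i = m j := Finset.sum_eq_single j (fun i _ hij => hz i hij) (by simp)
  have := hm j
  omega

lemma findx (z : Fin n → ℕ) (hz : d + 1 ≤ ∑ i, z i) :
    ∃ x : Fin n → ℕ, (∀ k, x k ≤ z k) ∧ (∑ i, x i) = d ∧ x ≠ m := by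
  obtain ⟨x, hx, hxs⟩ := greedy z d (by omega)
  by_cases hxm : x = m
  · subst hxm
    have hj : ∃ j, x j < z j := by
      by_contra h
      push_neg at h
      have : ∑ i, z i ≤ ∑ i, x i := Finset.sum_le_sum (fun i _ => h i)
      omega
    obtain ⟨j, hj⟩ := hj
    obtain ⟨i, hij, hi⟩ := exists_ne_pos hd hmsum hm j
    refine ⟨mv x i j 1, ?_, ?_, mv_ne x j (le_refl 1) hi⟩
    · intro k
      by_cases hki : k = i
      · subst hki; simp [mv]; have := hx k; omega
      · by_cases hkj : k = j
        · subst hkj; simp [mv, hki]; omega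
        · simp [mv, hki, hkj]; exact hx k
    · rw [sum_mv x hij hi, hxs]
  · exact ⟨x, hx, hxs, hxm⟩

lemma splitA' (w : Fin n → ℕ) (hw : (∑ i, w i) = d) :
    ∃ x y : Fin n → ℕ, (∀ k, x k + y k = m k + w k) ∧
      (∑ i, x i) = d ∧ (∑ i, y i) = d ∧ x ≠ m ∧ y ≠ m := by
  have hjex : ∃ j, 1 ≤ w j := by
    by_contra h
    push_neg at h
    have : ∑ i, w i = 0 := Finset.sum_eq_zero (fun i _ => by have := h i; omega)
    omega
  obtain ⟨j, hjw⟩ := hjex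
  obtain ⟨i, hij, hi⟩ := exists_ne_pos hd hmsum hm j
  by_cases hym : mv w j i 1 = m
  · -- the stubborn case : w = m + e_j - e_i
    have hwi : w i + 1 = m i := by
      have := congrFun hym i
      simp [mv, hij, Ne.symm hij] at this
      omega
    have hwj : w j = m j + 1 := by
      have := congrFun hym j
      simp [mv] at this
      omega
    have hwk : ∀ k, k ≠ i → k ≠ j → w k = m k := by
      intro k hki hkj
      have := congrFun hym k
      simpa [mv, hki, hkj] using this
    by_cases hkex : ∃ k, k ≠ i ∧ k ≠ j ∧ 1 ≤ m k
    · obtain ⟨k, hki, hkj, hkm⟩ := hkex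
      refine ⟨mv m k j 1, mv m i k 1, ?_, ?_, ?_, mv_ne m j (le_refl 1) hkm,
        mv_ne m k (le_refl 1) hi⟩
      · intro l
        by_cases hli : l = i
        · subst hli; simp [mv, hij, Ne.symm hij, Ne.symm hki]; omega
        · by_cases hlj : l = j
          · subst hlj; simp [mv, hij, Ne.symm hij, Ne.symm hkj]; omega
          · by_cases hlk : l = k
            · subst hlk; simp [mv, hki, hkj]
              have := hwk l hki hkj; omega
            · simp [mv, hli, hlj, hlk]
              have := hwk l hli hlj; omega
      · rw [sum_mv m hkj hkm, hmsum]
      · rw [sum_mv m (Ne.symm hki) hi, hmsum]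
    · push_neg at hkex
      have hmk0 : ∀ k, k ≠ i → k ≠ j → m k = 0 := by
        intro k hki hkj
        have := hkex k hki hkj
        omega
      have hsum2 : m i + m j = d := by
        have h2 : ∑ k, m k = ∑ k, ((Pi.single i (m i) : Fin n → ℕ) k
            + (Pi.single j (m j) : Fin n → ℕ) k) := by
          refine Finset.sum_congr rfl (fun k _ => ?_)
          by_cases hki : k = i
          · subst hki; simp [Pi.single_apply, hij]
          · by_cases hkj : k = j
            · subst hkj; simp [Pi.single_apply, hki, Ne.symm hij]
            · simp [Pi.single_apply, hki, hkj, hmk0 k hki hkj]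
        simp only [Finset.sum_add_distrib, Finset.sum_pi_single, Finset.sum_pi_single',
          Finset.mem_univ, if_pos] at h2
        omega
      have hmi2 : 2 ≤ m i := by have := hm j; omega
      have hmj2 : 2 ≤ m j := by have := hm i; omega
      refine ⟨mv m i j 2, mv m j i 1, ?_, ?_, ?_,
        mv_ne m j (by norm_num) (by omega), mv_ne m i (le_refl 1) (by omega)⟩
      · intro l
        by_cases hli : l = i
        · subst hli; simp [mv, hij, Ne.symm hij]; omega
        · by_cases hlj : l = j
          · subst hlj; simp [mv, hij, Ne.symm hij]; omega
          · simp [mv, hli, hlj]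
            have := hwk l hli hlj; omega
      · rw [sum_mv m hij (by omega), hmsum]
      · rw [sum_mv m (Ne.symm hij) (by omega), hmsum]
  · refine ⟨mv m i j 1, mv w j i 1, ?_, ?_, ?_, mv_ne m j (le_refl 1) hi, hym⟩
    · intro l
      by_cases hli : l = i
      · subst hli; simp [mv, hij, Ne.symm hij]; omega
      · by_cases hlj : l = j
        · subst hlj; simp [mv, hij, Ne.symm hij]; omega
        · simp [mv, hli, hlj]
    · rw [sum_mv m hij hi, hmsum]
    · rw [sum_mv w (Ne.symm hij) hjw, hw]

end WithM


section Closure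

variable {d : ℕ} {m : Fin n → ℕ} {A : Set (Fin n → ℕ)}
  (hd : 3 ≤ d) (hmsum : (∑ i, m i) = d) (hm : ∀ i, m i ≤ d - 2)
  (hA : A = {a | (∑ i, a i) = d ∧ a ≠ m})

include hd hmsum hm hA

lemma memA {a : Fin n → ℕ} (h1 : (∑ i, a i) = d) (h2 : a ≠ m) : a ∈ A := by
  rw [hA]; exact ⟨h1, h2⟩

lemma mem_closure_two (t : ℕ) : ∀ z : Fin n → ℕ, (∑ i, z i) = (t + 2) * d →
    z ∈ AddSubmonoid.closure A := by
  induction t with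
  | zero =>
    intro z hz
    have h2d : (0 + 2) * d = d + d := by ring
    obtain ⟨x, hx, hxs⟩ := greedy z d (by omega)
    set y : Fin n → ℕ := fun k => z k - x k with hy
    have hzy : ∀ k, x k + y k = z k := fun k => by
      have := hx k; simp [hy]; omega
    have hys : (∑ i, y i) = d := by
      have h : (∑ i, x i) + (∑ i, y i) = ∑ i, z i := by
        rw [← Finset.sum_add_distrib]
        exact Finset.sum_congr rfl (fun k _ => hzy k)
      omega
    by_cases hxm : x = m
    · obtain ⟨x', y', hadd, hx', hy', hx'm, hy'm⟩ := splitA' hd hmsum hm y hys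
      have hzxy : z = x' + y' := by
        funext k
        have h1 := hadd k
        have h2 := hzy k
        rw [hxm] at h2
        simp only [Pi.add_apply]
        omega
      rw [hzxy]
      exact add_mem (AddSubmonoid.subset_closure (memA hd hmsum hm hA hx' hx'm))
        (AddSubmonoid.subset_closure (memA hd hmsum hm hA hy' hy'm))
    · by_cases hym : y = m
      · obtain ⟨x', y', hadd, hx', hy', hx'm, hy'm⟩ := splitA' hd hmsum hm x hxs
        have hzxy : z = x' + y' := by
          funext k
          have h1 := hadd k
          have h2 := hzy k
          rw [hym] at h2
          simp only [Pi.add_apply]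
          omega
        rw [hzxy]
        exact add_mem (AddSubmonoid.subset_closure (memA hd hmsum hm hA hx' hx'm))
          (AddSubmonoid.subset_closure (memA hd hmsum hm hA hy' hy'm))
      · have hzxy : z = x + y := by
          funext k
          have h2 := hzy k
          simp only [Pi.add_apply]
          omega
        rw [hzxy]
        exact add_mem (AddSubmonoid.subset_closure (memA hd hmsum hm hA hxs hxm))
          (AddSubmonoid.subset_closure (memA hd hmsum hm hA hys hym))
  | succ t ih =>
    intro z hz
    have hmul : (t + 1 + 2) * d = (t + 2) * d + d := by ring
    have hdle : d ≤ (t + 2) * d := Nat.le_mul_of_pos_left d (by omega)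
    obtain ⟨x, hx, hxs, hxm⟩ := findx hd hmsum hm z (by omega)
    set y : Fin n → ℕ := fun k => z k - x k with hy
    have hzy : ∀ k, x k + y k = z k := fun k => by
      have := hx k; simp [hy]; omega
    have hys : (∑ i, y i) = (t + 2) * d := by
      have h : (∑ i, x i) + (∑ i, y i) = ∑ i, z i := by
        rw [← Finset.sum_add_distrib]
        exact Finset.sum_congr rfl (fun k _ => hzy k)
      omega
    have hzxy : z = x + y := by
      funext k
      have h2 := hzy k
      simp only [Pi.add_apply]
      omega
    rw [hzxy]
    exact add_mem (AddSubmonoid.subset_closure (memA hd hmsum hm hA hxs hxm))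
      (ih y hys)

lemma m_not_mem : m ∉ AddSubmonoid.closure A := by
  intro hmem
  have hadd : ∀ a b : Fin n → ℕ,
      a ∈ {a : Fin n → ℕ | a = 0 ∨ (1 ≤ ∑ i, a i ∧ d ∣ ∑ i, a i ∧ a ≠ m)} →
      b ∈ {a : Fin n → ℕ | a = 0 ∨ (1 ≤ ∑ i, a i ∧ d ∣ ∑ i, a i ∧ a ≠ m)} →
      a + b ∈ {a : Fin n → ℕ | a = 0 ∨ (1 ≤ ∑ i, a i ∧ d ∣ ∑ i, a i ∧ a ≠ m)} := by
    rintro a b (rfl | ⟨ha1, hda, ham⟩) hb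
    · simpa using hb
    · rcases hb with rfl | ⟨hb1, hdb, hbm⟩
      · simpa using Or.inr ⟨ha1, hda, ham⟩
      · right
        have hsa : ∑ i, (a + b) i = (∑ i, a i) + ∑ i, b i := by
          simp [Finset.sum_add_distrib]
        have hda' : d ≤ ∑ i, a i := Nat.le_of_dvd (by omega) hda
        have hdb' : d ≤ ∑ i, b i := Nat.le_of_dvd (by omega) hdb
        refine ⟨by omega, by rw [hsa]; exact dvd_add hda hdb, ?_⟩
        intro h
        have : ∑ i, (a + b) i = ∑ i, m i := by rw [h]
        omega
  set S : AddSubmonoid (Fin n → ℕ) :=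
    ⟨⟨{a : Fin n → ℕ | a = 0 ∨ (1 ≤ ∑ i, a i ∧ d ∣ ∑ i, a i ∧ a ≠ m)},
      fun {a b} ha hb => hadd a b ha hb⟩, Or.inl rfl⟩ with hS
  have hle : AddSubmonoid.closure A ≤ S := by
    rw [AddSubmonoid.closure_le]
    intro a haA
    rw [hA] at haA
    obtain ⟨has, ham⟩ := haA
    exact Or.inr ⟨by omega, by rw [has], ham⟩
  have hmS : m ∈ S := hle hmem
  rcases hmS with h0 | ⟨_, _, hne⟩
  · have : ∑ i, m i = 0 := by rw [h0]; simp
    omega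
  · exact hne rfl

end Closure

end Stmt4Aux

/-- For `n ≥ 2`, `d ≥ 3` and `m ∈ ℕ^n` of coordinate sum `d` with all
coordinates at most `d-2`, the only vector of coordinate sum a positive
multiple of `d` not lying in the submonoid `H` generated by all vectors of
coordinate sum `d` except `m` is `m` itself. -/
theorem stmt_4 (n d : ℕ) (hn : 2 ≤ n) (hd : 3 ≤ d)
    (m : Fin n → ℕ) (hmsum : (∑ i, m i) = d) (hm : ∀ i, m i ≤ d - 2)
    (A : Set (Fin n → ℕ)) (hA : A = {a | (∑ i, a i) = d ∧ a ≠ m})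
    (z : Fin n → ℕ) (t : ℕ) (ht : 1 ≤ t) (hz : (∑ i, z i) = t * d) :
    z ∉ AddSubmonoid.closure A ↔ z = m := by
  constructor
  · intro hz'
    by_contra hzm
    apply hz'
    rcases Nat.lt_or_ge t 2 with h2 | h2
    · have ht1 : t = 1 := by omega
      exact AddSubmonoid.subset_closure
        (by rw [hA]; exact ⟨by rw [hz, ht1, one_mul], hzm⟩)
    · obtain ⟨s, rfl⟩ : ∃ s, t = s + 2 := ⟨t - 2, by omega⟩
      exact Stmt4Aux.mem_closure_two hd hmsum hm hA s z hz
  · rintro rfl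
    exact Stmt4Aux.m_not_mem hd hmsum hm hA
end

section
/- For every integer d ≥ 2, the polynomial identity ∑_{i=0}^{d} (-1)^{i-1} C(d,i)·(i-1)(d-i-1)/(d-1) · z^i = (1-z)^{d-2}·(1+(d-2)z+z^2) holds in ℚ[z]. -/
/-!
Since `(i - 1)(d - i - 1) = i(d - i) - (d - 1)` and `C(d,i) i (d - i) = d(d - 1) C(d-2, i-1)`,
the sum splits as `(1 - z)^d + d z (1 - z)^(d-2)`, which factors as the right-hand side.
-/

open Polynomial Finset

theorem Nat.add_two_choose_succ_mul_mul_sub (n i : ℕ) :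
    (n + 2).choose (i + 1) * (i + 1) * (n + 1 - i) = (n + 2) * (n + 1) * n.choose i := by
  rw [← Nat.add_one_mul_choose_eq, mul_assoc, ← Nat.choose_mul_succ_eq]
  ring

theorem Polynomial.one_sub_X_pow_eq_sum_range {R : Type*} [CommRing R] {n N : ℕ} (h : n < N) :
    (1 - X : R[X]) ^ n = ∑ i ∈ range N, C ((-1) ^ i * (n.choose i : R)) * X ^ i := by
  have hsub : range (n + 1) ⊆ range N := range_subset_range.2 h
  rw [sub_eq_neg_add, add_pow, ← sum_subset hsub fun i _ hi => ?_]
  · refine sum_congr rfl fun i _ => ?_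
    rw [C_mul, C_pow, C_neg, C_1, ← Polynomial.C_eq_natCast, neg_pow, one_pow, mul_one]
    ring
  · rw [Nat.choose_eq_zero_of_lt (by simpa using hi), Nat.cast_zero, mul_zero, C_0, zero_mul]

theorem Polynomial.sum_neg_one_pow_choose_mul_mul_sub_X_pow {K : Type*} [Field K] [CharZero K]
    (n : ℕ) :
    ∑ i ∈ range (n + 3),
        C ((-1) ^ (i + 1) * ((n + 2).choose i : K) * i * ((n : K) + 2 - i) / (n + 1)) * X ^ i =
      C ((n : K) + 2) * X * (1 - X) ^ n := by
  rw [sum_range_succ', one_sub_X_pow_eq_sum_range (by omega : n < n + 2), mul_sum]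
  simp only [Nat.cast_zero, mul_zero, zero_mul, zero_div, C_0, add_zero]
  refine sum_congr rfl fun j hj => ?_
  have hj : j ≤ n + 1 := Nat.lt_succ_iff.1 (mem_range.1 hj)
  have hchoose := congrArg (Nat.cast : ℕ → K) (Nat.add_two_choose_succ_mul_mul_sub n j)
  push_cast [Nat.cast_sub hj] at hchoose
  have hcoeff : (-1) ^ (j + 1 + 1) * ((n + 2).choose (j + 1) : K) * (j + 1 : ℕ) *
      ((n : K) + 2 - (j + 1 : ℕ)) / (n + 1) = (n + 2) * ((-1) ^ j * n.choose j) := by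
    rw [div_eq_iff (Nat.cast_add_one_ne_zero n)]
    push_cast
    linear_combination (-1) ^ j * hchoose
  rw [hcoeff, C_mul, pow_succ]
  ring

/-- h-polynomial of the Gorenstein pinched Veronese `P_{2,d,(d-1,1)}`:
`∑_{i=0}^{d} (-1)^{i-1} C(d,i)(i-1)(d-i-1)/(d-1) z^i = (1-z)^{d-2}(1+(d-2)z+z^2)`
in `ℚ[z]`. -/
theorem stmt_10 (d : ℕ) (hd : 2 ≤ d) :
    (∑ i ∈ Finset.range (d + 1),
        Polynomial.C ((-1 : ℚ) ^ (i + 1) * (d.choose i : ℚ) * ((i : ℚ) - 1) *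
          ((d : ℚ) - (i : ℚ) - 1) / ((d : ℚ) - 1)) * X ^ i) =
      (1 - X) ^ (d - 2) * (1 + Polynomial.C ((d : ℚ) - 2) * X + X ^ 2) := by
  obtain ⟨n, rfl⟩ := Nat.exists_eq_add_of_le' hd
  have hsplit : ∀ i : ℕ, (-1 : ℚ) ^ (i + 1) * ((n + 2).choose i : ℚ) * ((i : ℚ) - 1) *
      (((n + 2 : ℕ) : ℚ) - i - 1) / (((n + 2 : ℕ) : ℚ) - 1) =
        (-1) ^ i * ((n + 2).choose i : ℚ) +
          (-1) ^ (i + 1) * ((n + 2).choose i : ℚ) * i * ((n : ℚ) + 2 - i) / (n + 1) := by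
    intro i
    have hden : ((n + 2 : ℕ) : ℚ) - 1 = n + 1 := by push_cast; ring
    have hn : (n : ℚ) + 1 ≠ 0 := Nat.cast_add_one_ne_zero n
    rw [hden]
    field_simp
    push_cast
    ring
  simp only [hsplit, C_add, add_mul, sum_add_distrib, sum_neg_one_pow_choose_mul_mul_sub_X_pow,
    ← one_sub_X_pow_eq_sum_range (Nat.lt_succ_self _), Nat.add_sub_cancel]
  rw [pow_add]
  simp only [C_sub, map_natCast, C_ofNat]
  push_cast
  ring
end

section
/- For every integer d ≥ 2 and 0 ≤ i ≤ d, the rational number C(d,i)·(i-1)·(d-i-1)/(d-1) is an integer. -/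
/-!
Since `(i - 1)(d - i - 1) = i (d - i) - (d - 1)` and `i (d - i) C(d, i) = d (d - 1) C(d - 2, i - 1)`,
the quotient equals `d C(d - 2, i - 1) - C(d, i)` for `i ≥ 1`, and `-1` for `i = 0`.
-/

theorem Nat.choose_succ_succ_mul_mul_sub (n k : ℕ) :
    (n + 2).choose (k + 1) * (k + 1) * (n + 1 - k) = (n + 2) * (n + 1) * n.choose k := by
  calc (n + 2).choose (k + 1) * (k + 1) * (n + 1 - k)
      = (n + 2) * ((n + 1).choose k * (n + 1 - k)) := by
        rw [← Nat.add_one_mul_choose_eq, mul_assoc]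
    _ = (n + 2) * (n + 1) * n.choose k := by
        rw [← Nat.choose_mul_succ_eq]; ring

theorem choose_mul_sub_one_mul_sub_sub_one (n j : ℕ) (hj : j ≤ n + 1) :
    ((n + 2).choose (j + 1) : ℚ) * ((j + 1 : ℕ) - 1) * ((n + 2 : ℕ) - (j + 1 : ℕ) - 1) =
      ((n + 2 : ℕ) - 1) * ((n + 2) * n.choose j - (n + 2).choose (j + 1)) := by
  have key := congrArg (Nat.cast (R := ℚ)) (Nat.choose_succ_succ_mul_mul_sub n j)
  push_cast [Nat.cast_sub hj] at key ⊢
  linear_combination key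

/-- For `d ≥ 2` and `0 ≤ i ≤ d`, the rational number
`C(d,i)·(i-1)·(d-i-1)/(d-1)` is an integer. -/
theorem stmt_11 (d i : ℕ) (hd : 2 ≤ d) (hi : i ≤ d) :
    ∃ k : ℤ, ((d.choose i : ℚ) * ((i : ℚ) - 1) * ((d : ℚ) - (i : ℚ) - 1)) /
        ((d : ℚ) - 1) = (k : ℚ) := by
  obtain ⟨n, rfl⟩ : ∃ n, d = n + 2 := ⟨d - 2, by omega⟩
  have hne : ((n + 2 : ℕ) : ℚ) - 1 ≠ 0 := by push_cast; linarith [(n.cast_nonneg : (0 : ℚ) ≤ n)]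
  rcases i with _ | j
  · exact ⟨-1, by rw [div_eq_iff hne, Nat.choose_zero_right]; push_cast; ring⟩
  · refine ⟨(n + 2) * n.choose j - (n + 2).choose (j + 1), ?_⟩
    rw [div_eq_iff hne, choose_mul_sub_one_mul_sub_sub_one n j (by omega)]
    push_cast
    ring
end

section
/- Let d ≥ 3 and let H ⊆ ℕ^2 be the submonoid generated by A = {(j, d-j) : 0 ≤ j ≤ d} \ {(i, d-i)} where 2 ≤ i ≤ d-2. Set h = ∑_{j=0}^{i} (j, d-j) (sum of the first i+1 Veronese generators). Then the set F = {(0,d), (1,d-1), ..., (i-1, d-i+1)} satisfies: h - ∑F = (i, d-i) ∉ H, but for every element a ∈ F, h - ∑(F \ {a}) ∈ H. -/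
/-!
Every generator has total degree `d`, so an element of `H` of total degree `d` is a single
generator; hence `(i, d - i)`, the one Veronese point removed from `A`, is not in `H`.
For `a = (j, d - j) ∈ F` we have `h - ∑(F \ {a}) = (j, d - j) + (i, d - i)`, and this sum of two
Veronese points can be rebalanced into two points avoiding index `i`:
`(j - 1) + (i + 1)` when `j > 0`, and `1 + (i - 1)` when `j = 0`.
-/

open Finset

theorem AddSubmonoid.mem_of_mem_closure_of_degree_eq {M : Type*} [AddMonoid M] (φ : M →+ ℕ)
    {A : Set M} {d : ℕ} (hd : 0 < d) (hA : ∀ a ∈ A, φ a = d) {p : M}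
    (hp : p ∈ AddSubmonoid.closure A) (hpd : φ p = d) : p ∈ A := by
  obtain ⟨l, hlA, rfl⟩ := AddSubmonoid.exists_list_of_mem_closure hp
  have hmap : l.map φ = List.replicate l.length d := by
    rw [List.eq_replicate_iff]
    simp only [List.length_map, List.mem_map, true_and]
    rintro _ ⟨a, ha, rfl⟩
    exact hA a (hlA a ha)
  have hlen : l.length = 1 := by
    rw [map_list_sum, hmap, List.sum_replicate, smul_eq_mul] at hpd
    exact (Nat.mul_eq_right hd.ne').mp hpd
  obtain ⟨a, rfl⟩ := List.length_eq_one_iff.mp hlen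
  simpa using hlA a

def pinchedVeronese (d i : ℕ) : Set (ℕ × ℕ) :=
  {p | p.1 + p.2 = d ∧ p ≠ (i, d - i)}

section PinchedVeronese

variable {d i j : ℕ}

theorem mem_pinchedVeronese (hj : j ≤ d) (hji : j ≠ i) : (j, d - j) ∈ pinchedVeronese d i :=
  ⟨by simp only; omega, fun h => hji (congrArg Prod.fst h)⟩

theorem not_mem_closure_pinchedVeronese (hd : 0 < d) (hi : i ≤ d) :
    (i, d - i) ∉ AddSubmonoid.closure (pinchedVeronese d i) := fun hmem =>
  (AddSubmonoid.mem_of_mem_closure_of_degree_eq (.fst ℕ ℕ + .snd ℕ ℕ) hd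
    (fun _ ha => ha.1) hmem (show i + (d - i) = d by omega)).2 rfl

theorem veronese_add_mem_closure_pinchedVeronese (hi : 2 ≤ i) (hid : i < d) (hj : j < i) :
    (j, d - j) + (i, d - i) ∈ AddSubmonoid.closure (pinchedVeronese d i) := by
  have hmem {k : ℕ} (hk : k ≤ d) (hki : k ≠ i) :
      (k, d - k) ∈ AddSubmonoid.closure (pinchedVeronese d i) :=
    AddSubmonoid.subset_closure (mem_pinchedVeronese hk hki)
  rcases Nat.eq_zero_or_pos j with rfl | hj₀
  · convert add_mem (hmem (k := 1) (by omega) (by omega)) (hmem (k := i - 1) (by omega) (by omega))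
      using 1
    ext <;> simp only [Prod.fst_add, Prod.snd_add] <;> omega
  · convert add_mem (hmem (k := j - 1) (by omega) (by omega)) (hmem (k := i + 1) hid (by omega))
      using 1
    ext <;> simp only [Prod.fst_add, Prod.snd_add] <;> omega

end PinchedVeronese

theorem stmt_15_general (d i : ℕ) (hi : 2 ≤ i) (hi' : i ≤ d - 2)
    (A : Set (ℕ × ℕ)) (hA : A = {p | p.1 + p.2 = d ∧ p ≠ (i, d - i)})
    (h : ℕ × ℕ) (hh : h = ∑ j ∈ Finset.range (i + 1), ((j, d - j) : ℕ × ℕ))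
    (F : Finset (ℕ × ℕ)) (hF : F = (Finset.range i).image fun j => ((j, d - j) : ℕ × ℕ)) :
    (h = (∑ b ∈ F, b) + (i, d - i)) ∧
    ((i, d - i) : ℕ × ℕ) ∉ AddSubmonoid.closure A ∧
    (∀ a ∈ F, ∃ w ∈ AddSubmonoid.closure A, h = (∑ b ∈ F.erase a, b) + w) := by
  have hsumF : ∑ b ∈ F, b = ∑ j ∈ range i, ((j, d - j) : ℕ × ℕ) := by
    rw [hF, sum_image fun j _ k _ hjk => congrArg Prod.fst hjk]
  have hsplit : h = (∑ b ∈ F, b) + (i, d - i) := by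
    rw [hh, sum_range_succ, hsumF]
  have hA' : A = pinchedVeronese d i := hA
  refine ⟨hsplit, hA' ▸ not_mem_closure_pinchedVeronese (by omega) (by omega), ?_⟩
  intro a ha
  obtain ⟨j, hj, rfl⟩ := mem_image.mp (hF ▸ ha)
  refine ⟨_, hA' ▸ veronese_add_mem_closure_pinchedVeronese hi (by omega) (mem_range.mp hj), ?_⟩
  rw [hsplit, ← sum_erase_add F _ ha, add_assoc]

/-- `F = {(0,d),…,(i-1,d-i+1)}` is a minimal non-face of the squarefree divisor
complex `Δ_h` of the pinched Veronese semigroup, where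
`h = ∑_{j=0}^{i} (j,d-j)`: `h - ∑F = (i,d-i) ∉ H`, while `h - ∑(F\{a}) ∈ H`
for every `a ∈ F`. -/
theorem stmt_15 (d i : ℕ) (hd : 3 ≤ d) (hi : 2 ≤ i) (hi' : i ≤ d - 2)
    (A : Set (ℕ × ℕ)) (hA : A = {p | p.1 + p.2 = d ∧ p ≠ (i, d - i)})
    (h : ℕ × ℕ) (hh : h = ∑ j ∈ Finset.range (i + 1), ((j, d - j) : ℕ × ℕ))
    (F : Finset (ℕ × ℕ)) (hF : F = (Finset.range i).image fun j => ((j, d - j) : ℕ × ℕ)) :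
    (h = (∑ b ∈ F, b) + (i, d - i)) ∧
    ((i, d - i) : ℕ × ℕ) ∉ AddSubmonoid.closure A ∧
    (∀ a ∈ F, ∃ w ∈ AddSubmonoid.closure A, h = (∑ b ∈ F.erase a, b) + w) :=
  stmt_15_general d i hi hi' A hA h hh F hF
end

section
/- Let d ≥ 3, 2 ≤ i ≤ d-2, H the submonoid of ℕ² generated by A = {(j,d-j) : 0 ≤ j ≤ d} \ {(i,d-i)}, and let t = ∑_{a ∈ A∪{(i,d-i)}} a = (∑_{j=0}^d j, ∑_{j=0}^d (d-j)) = (d(d+1)/2, d(d+1)/2). Then t - ∑_{a∈A} a = (i, d-i) ∉ H, while for every b ∈ A, t - ∑_{a ∈ A\{b\}} a = (i,d-i) + b ∈ H. -/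
/-- The squarefree divisor complex `Δ_t` on the vertex set
`A = {(j,d-j) : 0 ≤ j ≤ d} \ {(i,d-i)}` (with `t = ∑_{j=0}^{d}(j,d-j)
= (d(d+1)/2, d(d+1)/2)`) is the boundary of a simplex:
`t - ∑A = (i,d-i) ∉ H`, while for every `b ∈ A`,
`t - ∑(A\{b}) = (i,d-i)+b ∈ H`. -/
theorem stmt_19 (d i : ℕ) (hd : 3 ≤ d) (hi : 2 ≤ i) (hi' : i ≤ d - 2)
    (A : Finset (ℕ × ℕ))
    (hA : A = ((Finset.range (d + 1)).image fun j => ((j, d - j) : ℕ × ℕ)).erase (i, d - i))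
    (t : ℕ × ℕ) (ht : t = ∑ j ∈ Finset.range (d + 1), ((j, d - j) : ℕ × ℕ)) :
    t = (d * (d + 1) / 2, d * (d + 1) / 2) ∧
    (t = (∑ a ∈ A, a) + (i, d - i)) ∧
    ((i, d - i) : ℕ × ℕ) ∉ AddSubmonoid.closure (A : Set (ℕ × ℕ)) ∧
    (∀ b ∈ A,
      t = (∑ a ∈ A.erase b, a) + ((i, d - i) + b) ∧
      ((i, d - i) + b) ∈ AddSubmonoid.closure (A : Set (ℕ × ℕ))) := by

  have hid : i ≤ d - 2 := hi'
  have hid' : i + 2 ≤ d := by omega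
  -- sum of first coordinates
  have hgauss : ∑ j ∈ Finset.range (d + 1), j = d * (d + 1) / 2 := by
    rw [Finset.sum_range_id]
    congr 1
    simp [Nat.mul_comm]
  have ht1 : t = (d * (d + 1) / 2, d * (d + 1) / 2) := by
    rw [ht]
    ext
    · simp only [Prod.fst_sum]
      exact hgauss
    · simp only [Prod.snd_sum]
      rw [← Finset.sum_range_reflect (fun j => d - j) (d+1)]
      have : ∀ j ∈ Finset.range (d+1), d - (d + 1 - 1 - j) = j := by
        intro j hj
        simp only [Finset.mem_range] at hj
        omega
      rw [Finset.sum_congr rfl this]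
      exact hgauss
  -- injectivity, membership facts
  have hmemI : ((i, d - i) : ℕ × ℕ) ∈ (Finset.range (d + 1)).image fun j => ((j, d - j) : ℕ × ℕ) := by
    exact Finset.mem_image.2 ⟨i, Finset.mem_range.2 (by omega), rfl⟩
  have hsumimg : (∑ a ∈ (Finset.range (d + 1)).image (fun j => ((j, d - j) : ℕ × ℕ)), a) = t := by
    rw [ht, Finset.sum_image]
    intro x hx y hy hxy
    exact congrArg Prod.fst hxy
  have ht2 : t = (∑ a ∈ A, a) + (i, d - i) := by
    rw [hA, Finset.sum_erase_add _ _ hmemI, hsumimg]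
  -- characterization of A members
  have hmemA : ∀ a ∈ A, ∃ j, j ≤ d ∧ j ≠ i ∧ a = (j, d - j) := by
    intro a ha
    rw [hA, Finset.mem_erase, Finset.mem_image] at ha
    obtain ⟨hne, j, hj, rfl⟩ := ha
    refine ⟨j, by simpa using Nat.lt_succ_iff.mp (Finset.mem_range.mp hj), ?_, rfl⟩
    intro h
    exact hne (by rw [h])
  have hAmem : ∀ p, p ≤ d → p ≠ i → ((p, d - p) : ℕ × ℕ) ∈ A := by
    intro p hp hpi
    rw [hA, Finset.mem_erase]
    constructor
    · intro h
      exact hpi (congrArg Prod.fst h)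
    · exact Finset.mem_image.2 ⟨p, Finset.mem_range.2 (by omega), rfl⟩
  -- nonmembership
  have key : ∀ x ∈ AddSubmonoid.closure (A : Set (ℕ × ℕ)),
      d ∣ x.1 + x.2 ∧ (x.1 + x.2 = d → x ∈ A) ∧ (x.1 + x.2 = 0 → x = (0, 0)) := by
    intro x hx
    induction hx using AddSubmonoid.closure_induction with
    | mem a ha =>
      obtain ⟨j, hj, hji, rfl⟩ := hmemA a ha
      refine ⟨⟨1, by simp; omega⟩, fun _ => ha, fun h => by simp at h ⊢; omega⟩
    | zero =>
      refine ⟨⟨0, by simp⟩, fun h => ?_, fun _ => rfl⟩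
      simp only [Prod.fst_zero, Prod.snd_zero] at h
      exact absurd h (by omega)
    | add x y hx hy ihx ihy =>
      obtain ⟨⟨k, hk⟩, h2, h3⟩ := ihx
      obtain ⟨⟨l, hl⟩, h2', h3'⟩ := ihy
      refine ⟨⟨k + l, by simp only [Prod.fst_add, Prod.snd_add, Nat.mul_add]; omega⟩, ?_, ?_⟩
      · intro h
        simp only [Prod.fst_add, Prod.snd_add] at h
        have hkl : d * (k + l) = d * 1 := by rw [Nat.mul_add]; omega
        have hkl1 : k + l = 1 := Nat.eq_of_mul_eq_mul_left (by omega) hkl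
        rcases Nat.eq_zero_or_pos k with rfl | hkpos
        · have hx0 : x = (0, 0) := h3 (by omega)
          have : y.1 + y.2 = d := by omega
          have := h2' this
          rw [hx0]
          simpa [← Prod.zero_eq_mk] using this
        · have : l = 0 := by omega
          subst this
          have hy0 : y = (0, 0) := h3' (by omega)
          have : x.1 + x.2 = d := by omega
          have := h2 this
          rw [hy0]
          simpa [← Prod.zero_eq_mk] using this
      · intro h
        simp only [Prod.fst_add, Prod.snd_add] at h
        have hx0 := h3 (by omega)
        have hy0 := h3' (by omega)
        rw [hx0, hy0]
        rfl
  have hnot : ((i, d - i) : ℕ × ℕ) ∉ AddSubmonoid.closure (A : Set (ℕ × ℕ)) := by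
    intro h
    obtain ⟨_, h2, _⟩ := key _ h
    have : ((i, d - i) : ℕ × ℕ) ∈ A := h2 (by simp; omega)
    rw [hA, Finset.mem_erase] at this
    exact this.1 rfl
  refine ⟨ht1, ht2, hnot, ?_⟩
  intro b hb
  obtain ⟨j, hj, hji, rfl⟩ := hmemA b hb
  constructor
  · rw [ht2, ← Finset.sum_erase_add A _ hb]
    abel
  · obtain ⟨p, q, hp, hq, hpi, hqi, hpq⟩ :
        ∃ p q, p ≤ d ∧ q ≤ d ∧ p ≠ i ∧ q ≠ i ∧ p + q = i + j := by
      by_cases h1 : i + j = 2 * i - 1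
      · exact ⟨i + 1, i - 2, by omega, by omega, by omega, by omega, by omega⟩
      by_cases h2 : i + j = 2 * i + 1
      · exact ⟨i + 2, i - 1, by omega, by omega, by omega, by omega, by omega⟩
      · exact ⟨(i + j + 1) / 2, (i + j) / 2, by omega, by omega, by omega, by omega, by omega⟩
    have heq : ((i, d - i) : ℕ × ℕ) + (j, d - j) = (p, d - p) + (q, d - q) := by
      ext <;> simp [Prod.fst_add, Prod.snd_add] <;> omega
    rw [heq]
    exact AddSubmonoid.add_mem _ (AddSubmonoid.subset_closure (hAmem p hp hpi))
      (AddSubmonoid.subset_closure (hAmem q hq hqi))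
end
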